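/- arXiv:1607.06258 — 5 statements merged into one kernel-verified Lean document; each statement's English description precedes it below -/
import Mathlib

section
/- Let T be a sequential specification and H = (O, <_p, <_rt) a timed history that is sequentially consistent with respect to T. Then there exists an injective timestamp function t : O → ℕ that is strictly increasing along the process order (a <_p b implies t(a) < t(b)) such that the timed history (O, <_p, <'_rt), where a <'_rt b iff t(a) < t(b), is linearizable with respect to T. That is, any sequentially consistent execution becomes linearizable after reassigning to each process a distorted local clock that respects its process order. -/
/-!
STATEMENT 1: Any sequentially consistent execution becomes linearizable after
reassigning distorted local clocks respecting process order.
-/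

/-- `w : ℕ → Option O` enumerates the operations of `O` in increasing `r`-order:
it is defined on an initial segment of `ℕ`, every operation appears at exactly
one position, and positions respect `r`. -/
def IsEnum {O : Type} (r : O → O → Prop) (w : ℕ → Option O) : Prop :=
  (∀ n, w n = none → w (n + 1) = none) ∧
  (∀ a : O, ∃! n : ℕ, w n = some a) ∧
  (∀ m n : ℕ, ∀ a b : O, m < n → w m = some a → w n = some b → r a b)

/-- `r` is a linear extension of the process order `p`: a strict total order
containing `p` in which every operation has a finite past. -/
def IsLinearExtension {O : Type} (p r : O → O → Prop) : Prop :=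
  (∀ a, ¬ r a a) ∧
  (∀ a b c, r a b → r b c → r a c) ∧
  (∀ a b, a ≠ b → r a b ∨ r b a) ∧
  (∀ a b, p a b → r a b) ∧
  (∀ a, {b | r b a}.Finite)

/-- The history `(O, p)` is sequentially consistent with respect to the
sequential specification `T`. -/
def SeqConsistent {O : Type} (p : O → O → Prop) (T : Set (ℕ → Option O)) : Prop :=
  ∃ r : O → O → Prop, IsLinearExtension p r ∧ ∃ w, IsEnum r w ∧ w ∈ T

/-- The timed history `(O, p, rt)` is linearizable with respect to the
sequential specification `T`: some linear extension of `p` also contains the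
real-time order `rt` and yields a word of `T`. -/
def Linearizable {O : Type} (p rt : O → O → Prop) (T : Set (ℕ → Option O)) : Prop :=
  ∃ r : O → O → Prop, IsLinearExtension p r ∧ (∀ a b, rt a b → r a b) ∧
    ∃ w, IsEnum r w ∧ w ∈ T

/-- If the timed history `(O, p, rt)` is sequentially consistent with respect
to `T`, then there is an injective timestamp function `t : O → ℕ`, strictly
increasing along the process order, such that the timed history
`(O, p, fun a b => t a < t b)` is linearizable with respect to `T`. -/
theorem seqConsistent_implies_linearizable_up_to_clock_distortion
    {O : Type} [Countable O]
    (p rt : O → O → Prop)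
    (hp_irrefl : ∀ a, ¬ p a a) (hp_trans : ∀ a b c, p a b → p b c → p a c)
    (hrt_irrefl : ∀ a, ¬ rt a a) (hrt_trans : ∀ a b c, rt a b → rt b c → rt a c)
    (hprt : ∀ a b, p a b → rt a b)
    (T : Set (ℕ → Option O))
    (h : SeqConsistent p T) :
    ∃ t : O → ℕ, Function.Injective t ∧ (∀ a b, p a b → t a < t b) ∧
      Linearizable p (fun a b => t a < t b) T := by
  obtain ⟨r, hr, w, hw, hwT⟩ := h
  obtain ⟨hirr, htrans, htot, hpr, hfin⟩ := hr
  obtain ⟨hseg, huniq, hord⟩ := hw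
  -- timestamp: position of a in the enumeration
  choose t ht htu using huniq
  have hinj : Function.Injective t := by
    intro a b hab
    have := ht b
    rw [← hab, ht a] at this
    exact (Option.some.injEq _ _ ▸ this)
  have hlt : ∀ a b, r a b → t a < t b := by
    intro a b hab
    rcases lt_trichotomy (t a) (t b) with h1 | h1 | h1
    · exact h1
    · exact absurd (hinj h1 ▸ hab) (hirr b)
    · exact absurd (htrans _ _ _ (hord _ _ _ _ h1 (ht b) (ht a)) hab) (hirr b)
  refine ⟨t, hinj, fun a b hab => hlt a b (hpr a b hab), r,
    ⟨hirr, htrans, htot, hpr, hfin⟩, ?_, w, ⟨hseg, fun a => ⟨t a, ht a, htu a⟩, hord⟩, hwT⟩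
  intro a b hab
  exact hord _ _ _ _ hab (ht a) (ht b)
end

section
/- Let H = (O, <_p) be a history and ρ : O → ℕ a round function such that there are no operations a, b with ρ(a) > ρ(b) and a <_p b. For each r, let <_r be a strict total order on O_r = ρ⁻¹(r) containing the restriction of <_p to O_r. Then the transitive closure of the relation <_p ∪ ⋃_r <_r is irreflexive; that is, the union of the process order with the per-round serialization orders contains no cycle. -/
/-!
STATEMENT 3: The union of the process order with per-round serialization
orders contains no cycle: its transitive closure is irreflexive.
-/

/-- Let `p` be a strict partial order (the process order) on `O`, `ρ` a round
function such that `p` never goes from a higher round to a strictly lower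
round, and for each round `r` let `q r` be a strict total order on
`O_r = ρ⁻¹(r)` (relating only elements of `O_r`) containing the restriction of
`p` to `O_r`. Then the transitive closure of `p ∪ ⋃ r, q r` is irreflexive. -/
theorem rounds_union_acyclic {O : Type}
    (p : O → O → Prop)
    (hp_irrefl : ∀ a, ¬ p a a) (hp_trans : ∀ a b c, p a b → p b c → p a c)
    (ρ : O → ℕ)
    (hround : ∀ a b, p a b → ρ a ≤ ρ b)
    (q : ℕ → O → O → Prop)
    (hq_dom : ∀ r a b, q r a b → ρ a = r ∧ ρ b = r)
    (hq_irrefl : ∀ r a, ρ a = r → ¬ q r a a)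
    (hq_trans : ∀ r a b c, ρ a = r → ρ b = r → ρ c = r →
      q r a b → q r b c → q r a c)
    (hq_total : ∀ r a b, ρ a = r → ρ b = r → a ≠ b → q r a b ∨ q r b a)
    (hq_p : ∀ r a b, ρ a = r → ρ b = r → p a b → q r a b) :
    ∀ a : O, ¬ Relation.TransGen (fun x y => p x y ∨ ∃ r, q r x y) a a := by
  set s : O → O → Prop := fun x y => ρ x < ρ y ∨ (ρ x = ρ y ∧ q (ρ x) x y) with hs
  have step : ∀ x y, (p x y ∨ ∃ r, q r x y) → s x y := by
    intro x y h
    rcases h with h | ⟨r, h⟩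
    · rcases lt_or_eq_of_le (hround x y h) with h' | h'
      · exact Or.inl h'
      · exact Or.inr ⟨h', hq_p (ρ x) x y rfl h'.symm h⟩
    · obtain ⟨hx, hy⟩ := hq_dom r x y h
      exact Or.inr ⟨hx.trans hy.symm, by rwa [hx]⟩
  have strans : ∀ x y z, s x y → s y z → s x z := by
    intro x y z hxy hyz
    rcases hxy with h1 | ⟨e1, h1⟩ <;> rcases hyz with h2 | ⟨e2, h2⟩
    · exact Or.inl (h1.trans h2)
    · exact Or.inl (e2 ▸ h1)
    · exact Or.inl (e1 ▸ h2)
    · refine Or.inr ⟨e1.trans e2, hq_trans (ρ x) x y z rfl e1.symm (e1.trans e2).symm h1 ?_⟩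
      rwa [e1]
  have main : ∀ a b, Relation.TransGen (fun x y => p x y ∨ ∃ r, q r x y) a b → s a b := by
    intro a b h
    induction h with
    | single h => exact step _ _ h
    | tail _ h ih => exact strans _ _ _ ih (step _ _ h)
  intro a h
  rcases main a a h with h' | ⟨_, h'⟩
  · exact lt_irrefl _ h'
  · exact hq_irrefl (ρ a) a rfl h'
end

section
/- Let w be a finite word in the snapshot-memory sequential specification T_snap over n registers such that, for every register k, the values written by the successive occurrences of update(k, ·) in w are strictly increasing and positive. Then the vectors returned by the snapshot operations of w are pairwise pointwise comparable: for any two occurrences of snap(A) and snap(B) in w, either A k ≤ B k for all k, or B k ≤ A k for all k. -/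
/-- Operations of the snapshot memory over `n` registers. -/
inductive SnapOp (n : ℕ) : Type
  | update (k : Fin n) (v : ℕ) : SnapOp n
  | snap (A : Fin n → ℕ) : SnapOp n

/-- `snapRun M w`: `w` is a correct snapshot-memory behaviour starting from
memory state `M` (every snapshot returns the current state). -/
def snapRun {n : ℕ} : (Fin n → ℕ) → List (SnapOp n) → Prop
  | _, [] => True
  | M, SnapOp.update k v :: l => snapRun (Function.update M k v) l
  | M, SnapOp.snap A :: l => A = M ∧ snapRun M l

/-- The snapshot-memory sequential specification over `n` registers
(all registers initialized to 0). -/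
def TSnap (n : ℕ) : Set (List (SnapOp n)) := {w | snapRun (fun _ => 0) w}

/-- The values successively written to register `k` in the word `w`. -/
def updVals {n : ℕ} (k : Fin n) (w : List (SnapOp n)) : List ℕ :=
  w.filterMap (fun op =>
    match op with
    | SnapOp.update k' v => if k' = k then some v else none
    | SnapOp.snap _ => none)

/-! Monotone writes make the memory grow pointwise along the run, and every snapshot reads the
current memory, so the snapshots form a pointwise increasing sequence. -/

theorem List.Pairwise.rel_or_rel {α : Type*} {R : α → α → Prop} [Std.Refl R] {l : List α}
    (h : l.Pairwise R) {a b : α} (ha : a ∈ l) (hb : b ∈ l) : R a b ∨ R b a := by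
  have : Std.Symm fun x y => R x y ∨ R y x := ⟨fun _ _ => Or.symm⟩
  exact List.Pairwise.forall_of_forall (R := fun x y => R x y ∨ R y x)
    (fun x _ => Or.inl (refl x)) (h.imp Or.inl) ha hb

open SnapOp

section

variable {n : ℕ}

def snapshots (w : List (SnapOp n)) : List (Fin n → ℕ) :=
  w.filterMap fun
    | update _ _ => none
    | snap A => some A

@[simp]
lemma mem_snapshots {w : List (SnapOp n)} {A : Fin n → ℕ} : A ∈ snapshots w ↔ snap A ∈ w := by
  simp only [snapshots, List.mem_filterMap]
  constructor
  · rintro ⟨_ | _, hw, h⟩ <;> cases h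
    exact hw
  · exact fun h => ⟨_, h, rfl⟩

lemma updVals_cons_update (k k' : Fin n) (v : ℕ) (l : List (SnapOp n)) :
    updVals k (update k' v :: l) = if k' = k then v :: updVals k l else updVals k l := by
  by_cases h : k' = k <;> simp [updVals, h]

def WritesMonotone (M : Fin n → ℕ) (w : List (SnapOp n)) : Prop :=
  ∀ k, (M k :: updVals k w).IsChain (· ≤ ·)

lemma WritesMonotone.le_update {M : Fin n → ℕ} {k : Fin n} {v : ℕ} {l : List (SnapOp n)}
    (h : WritesMonotone M (update k v :: l)) : M ≤ Function.update M k v := by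
  intro j
  rcases eq_or_ne j k with rfl | hjk
  · have hj := h j
    rw [updVals_cons_update, if_pos rfl] at hj
    simpa using hj.rel
  · simp [hjk]

lemma WritesMonotone.of_cons_update {M : Fin n → ℕ} {k : Fin n} {v : ℕ} {l : List (SnapOp n)}
    (h : WritesMonotone M (update k v :: l)) : WritesMonotone (Function.update M k v) l := by
  intro j
  have hj := h j
  rw [updVals_cons_update] at hj
  rcases eq_or_ne k j with rfl | hkj
  · simpa using hj.tail
  · simpa [hkj, Function.update_of_ne hkj.symm] using hj

theorem pairwise_le_snapshots {M : Fin n → ℕ} {w : List (SnapOp n)} (hrun : snapRun M w)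
    (hmono : WritesMonotone M w) : (M :: snapshots w).Pairwise (· ≤ ·) := by
  induction w generalizing M with
  | nil => exact List.pairwise_singleton _ _
  | cons op l ih =>
    cases op with
    | update k v =>
      have hle := hmono.le_update
      have hl := ih hrun hmono.of_cons_update
      rw [List.pairwise_cons] at hl ⊢
      exact ⟨fun B hB => hle.trans (hl.1 B hB), hl.2⟩
    | snap A =>
      obtain ⟨rfl, hrun⟩ := hrun
      have hl := ih hrun hmono
      exact .cons (List.forall_mem_cons.2 ⟨le_rfl, (List.pairwise_cons.1 hl).1⟩) hl

end

theorem snapshots_comparable_general {n : ℕ} (w : List (SnapOp n)) (hw : w ∈ TSnap n)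
    (hmono : ∀ k : Fin n, (updVals k w).Chain' (· < ·))
    (A B : Fin n → ℕ) (hA : SnapOp.snap A ∈ w) (hB : SnapOp.snap B ∈ w) :
    (∀ k, A k ≤ B k) ∨ (∀ k, B k ≤ A k) := by
  have hwrites : WritesMonotone (fun _ => 0) w := fun k =>
    List.isChain_cons.mpr ⟨fun _ _ => Nat.zero_le _, (hmono k).imp fun _ _ => le_of_lt⟩
  exact (pairwise_le_snapshots hw hwrites).of_cons.rel_or_rel
    (mem_snapshots.mpr hA) (mem_snapshots.mpr hB)

/-- If `w ∈ TSnap n` and, for every register `k`, the values written by the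
successive occurrences of `update(k, ·)` in `w` are strictly increasing and
positive, then the vectors returned by the snapshots of `w` are pairwise
pointwise comparable. -/
theorem snapshots_comparable {n : ℕ} (w : List (SnapOp n)) (hw : w ∈ TSnap n)
    (hmono : ∀ k : Fin n, (updVals k w).Chain' (· < ·))
    (hpos : ∀ k : Fin n, ∀ v ∈ updVals k w, 0 < v)
    (A B : Fin n → ℕ) (hA : SnapOp.snap A ∈ w) (hB : SnapOp.snap B ∈ w) :
    (∀ k, A k ≤ B k) ∨ (∀ k, B k ≤ A k) :=
  snapshots_comparable_general w hw hmono A B hA hB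
end

section
/- Let H = (O, <_p) be a finite history over the snapshot-memory alphabet with n processes, where each operation is performed by a process π(·) < n, <_p relates only operations of the same process and totally orders the operations of each process, only process i performs the operations update(i, ·), and for every register k the values written by the successive updates of process k (in process order) are strictly increasing and positive. If H is sequentially consistent with respect to the snapshot-memory sequential specification T_snap, then for any two snapshot operations of H returning vectors A and B, either A k ≤ B k for all k < n, or B k ≤ A k for all k < n. -/
/-- The (sub-)history with operations `S ⊆ O`, process order `p` and labelling
`lab` is sequentially consistent with respect to the sequential specification
`T`: some enumeration `l` of `S` respecting `p` yields a word of `T`. -/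
def SeqConsList {O L : Type} (S : Set O) (p : O → O → Prop) (lab : O → L)
    (T : Set (List L)) : Prop :=
  ∃ l : List O, l.Nodup ∧ (∀ o, o ∈ l ↔ o ∈ S) ∧
    (∀ a b, a ∈ S → b ∈ S → p a b → List.Sublist [a, b] l) ∧
    l.map lab ∈ T

namespace List

variable {α : Type*} {l : List α} {a b : α}

theorem Nodup.not_pair_sublist_swap (hl : l.Nodup) (hab : [a, b] <+ l) : ¬ [b, a] <+ l := by
  induction l with
  | nil => simp at hab
  | cons c t ih =>
    simp only [sublist_cons_iff, nodup_cons] at *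
    grind

theorem exists_eq_append_cons_append_cons_of_mem (ha : a ∈ l) (hb : b ∈ l) (hab : a ≠ b) :
    ∃ u v w, l = u ++ a :: (v ++ b :: w) ∨ l = u ++ b :: (v ++ a :: w) := by
  obtain ⟨s, t, rfl⟩ := append_of_mem ha
  rcases mem_append.mp hb with hbs | hbt
  · obtain ⟨s₁, s₂, rfl⟩ := append_of_mem hbs
    exact ⟨s₁, s₂, t, Or.inr (by simp)⟩
  · obtain ⟨t₁, t₂, rfl⟩ := append_of_mem ((mem_cons.mp hbt).resolve_left (Ne.symm hab))
    exact ⟨s, t₁, t₂, Or.inl rfl⟩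

end List

section SnapshotMemory

variable {n : ℕ}

def stateAfter : (Fin n → ℕ) → List (SnapOp n) → Fin n → ℕ
  | M, [] => M
  | M, SnapOp.update k v :: l => stateAfter (Function.update M k v) l
  | M, SnapOp.snap _ :: l => stateAfter M l

theorem snapRun_append_snap {M A : Fin n → ℕ} {u w : List (SnapOp n)}
    (h : snapRun M (u ++ SnapOp.snap A :: w)) : A = stateAfter M u ∧ snapRun A w := by
  induction u generalizing M with
  | nil => exact ⟨h.1, h.1 ▸ h.2⟩
  | cons op u ih =>
    cases op with
    | update k v => exact ih h
    | snap A' => exact ih h.2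

theorem stateAfter_apply_eq_or_mem (M : Fin n → ℕ) (w : List (SnapOp n)) (k : Fin n) :
    stateAfter M w k = M k ∨ SnapOp.update k (stateAfter M w k) ∈ w := by
  induction w generalizing M with
  | nil => exact Or.inl rfl
  | cons op w ih =>
    cases op with
    | update k' v =>
      rcases eq_or_ne k k' with rfl | hk
      · rcases ih (Function.update M k v) with h | h
        · exact Or.inr (by simp [stateAfter, h])
        · exact Or.inr (List.mem_cons_of_mem _ h)
      · simpa [stateAfter, hk] using ih (Function.update M k' v)
    | snap A => exact (ih M).imp id (List.mem_cons_of_mem _)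

theorem le_stateAfter_apply {M : Fin n → ℕ} {w : List (SnapOp n)} {k : Fin n}
    (h : ∀ v, SnapOp.update k v ∈ w → M k ≤ v) : M k ≤ stateAfter M w k := by
  rcases stateAfter_apply_eq_or_mem M w k with heq | hmem
  · exact heq.ge
  · exact h _ hmem

theorem snap_le_snap_of_snapRun {M A B : Fin n → ℕ} {u v w : List (SnapOp n)}
    (h : snapRun M (u ++ SnapOp.snap A :: (v ++ SnapOp.snap B :: w)))
    (hM : ∀ k y, SnapOp.update k y ∈ v → M k ≤ y)
    (huv : ∀ k x y, SnapOp.update k x ∈ u → SnapOp.update k y ∈ v → x ≤ y) :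
    A ≤ B := by
  obtain ⟨rfl, hrun⟩ := snapRun_append_snap h
  obtain ⟨rfl, -⟩ := snapRun_append_snap hrun
  intro k
  refine le_stateAfter_apply fun y hy => ?_
  rcases stateAfter_apply_eq_or_mem M u k with heq | hmem
  · exact heq ▸ hM k y hy
  · exact huv k _ y hmem hy

end SnapshotMemory

section History

variable {O β : Type*} {n : ℕ} {p : O → O → Prop} {l : List O}

theorem rel_of_pair_sublist_of_total {π : O → β} (hl : l.Nodup)
    (hresp : ∀ x y, p x y → [x, y].Sublist l)
    (htotal : ∀ x y, π x = π y → x ≠ y → p x y ∨ p y x) {x y : O}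
    (hxy : [x, y].Sublist l) (hπ : π x = π y) : p x y := by
  have hne : x ≠ y := by
    rintro rfl
    exact List.nodup_iff_sublist.mp hl x hxy
  exact (htotal x y hπ hne).resolve_right fun hyx => hl.not_pair_sublist_swap hxy (hresp y x hyx)

theorem snap_le_snap_of_linearization {π : O → Fin n} {lab : O → SnapOp n}
    (hl : l.Nodup) (hresp : ∀ x y, p x y → [x, y].Sublist l)
    (htotal : ∀ x y, π x = π y → x ≠ y → p x y ∨ p y x)
    (hown : ∀ o k v, lab o = SnapOp.update k v → π o = k)
    (hmono : ∀ o o' k v v', p o o' → lab o = SnapOp.update k v →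
      lab o' = SnapOp.update k v' → v < v')
    (hrun : snapRun (fun _ => 0) (l.map lab)) {u v w : List O} {a b : O}
    (hsplit : l = u ++ a :: (v ++ b :: w)) {A B : Fin n → ℕ}
    (hA : lab a = SnapOp.snap A) (hB : lab b = SnapOp.snap B) : A ≤ B := by
  subst hsplit
  refine snap_le_snap_of_snapRun (u := u.map lab) (v := v.map lab) (w := w.map lab)
    (by simpa [hA, hB] using hrun) (fun _ _ _ => Nat.zero_le _) ?_
  intro k x y hx hy
  obtain ⟨o, ho, hlo⟩ := List.mem_map.mp hx
  obtain ⟨o', ho', hlo'⟩ := List.mem_map.mp hy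
  have hoo' : [o, o'].Sublist (u ++ a :: (v ++ b :: w)) :=
    (List.singleton_sublist.mpr ho).append (List.singleton_sublist.mpr (by simp [ho']))
  have hπ : π o = π o' := by rw [hown o k x hlo, hown o' k y hlo']
  exact (hmono o o' k x y (rel_of_pair_sublist_of_total hl hresp htotal hoo' hπ) hlo hlo').le

end History

theorem sc_snapshots_comparable_general {n : ℕ} {O : Type}
    (p : O → O → Prop) (π : O → Fin n) (lab : O → SnapOp n)
    (htotal : ∀ a b, π a = π b → a ≠ b → p a b ∨ p b a)
    (hown : ∀ o k v, lab o = SnapOp.update k v → π o = k)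
    (hmono : ∀ u u' k v v', p u u' → lab u = SnapOp.update k v →
      lab u' = SnapOp.update k v' → v < v')
    (hSC : SeqConsList Set.univ p lab (TSnap n))
    (a b : O) (A B : Fin n → ℕ)
    (hA : lab a = SnapOp.snap A) (hB : lab b = SnapOp.snap B) :
    (∀ k, A k ≤ B k) ∨ (∀ k, B k ≤ A k) := by
  obtain ⟨l, hl, hmem, hresp, hrun⟩ := hSC
  have hresp' : ∀ x y, p x y → [x, y].Sublist l := fun x y => hresp x y trivial trivial
  by_cases hab : a = b
  · subst hab
    obtain rfl : A = B := SnapOp.snap.inj (hA.symm.trans hB)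
    exact Or.inl fun _ => le_rfl
  obtain ⟨u, v, w, hsplit | hsplit⟩ :=
    List.exists_eq_append_cons_append_cons_of_mem ((hmem a).mpr trivial) ((hmem b).mpr trivial) hab
  · exact Or.inl (snap_le_snap_of_linearization hl hresp' htotal hown hmono hrun hsplit hA hB)
  · exact Or.inr (snap_le_snap_of_linearization hl hresp' htotal hown hmono hrun hsplit hB hA)

/-- Let `H` be a finite history over the snapshot-memory alphabet where `p`
(the process order, a strict partial order) relates only operations of the
same process `π`, totally orders the operations of each process, only process
`i` performs `update(i, ·)`, and for every register `k` the values written by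
the successive updates of process `k` (in process order) are strictly
increasing and positive. If `H` is sequentially consistent w.r.t. `TSnap n`,
then the vectors returned by any two snapshots of `H` are pointwise
comparable. -/
theorem sc_snapshots_comparable {n : ℕ} {O : Type} [Fintype O]
    (p : O → O → Prop) (π : O → Fin n) (lab : O → SnapOp n)
    (hp_irrefl : ∀ a, ¬ p a a) (hp_trans : ∀ a b c, p a b → p b c → p a c)
    (hproc : ∀ a b, p a b → π a = π b)
    (htotal : ∀ a b, π a = π b → a ≠ b → p a b ∨ p b a)
    (hown : ∀ o k v, lab o = SnapOp.update k v → π o = k)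
    (hmono : ∀ u u' k v v', p u u' → lab u = SnapOp.update k v →
      lab u' = SnapOp.update k v' → v < v')
    (hpos : ∀ o k v, lab o = SnapOp.update k v → 0 < v)
    (hSC : SeqConsList Set.univ p lab (TSnap n))
    (a b : O) (A B : Fin n → ℕ)
    (hA : lab a = SnapOp.snap A) (hB : lab b = SnapOp.snap B) :
    (∀ k, A k ≤ B k) ∨ (∀ k, B k ≤ A k) :=
  sc_snapshots_comparable_general p π lab htotal hown hmono hSC a b A B hA hB
end

section
/- Let H = (O, <_p) be a finite history over the snapshot-memory alphabet with n processes, where each operation is performed by a process π(·) < n, <_p relates only operations of the same process and totally orders the operations of each process, only process i performs the operations update(i, ·), and for every register k the values written by the successive updates of process k (in process order) are strictly increasing and positive. If H is sequentially consistent with respect to the snapshot-memory sequential specification T_snap, then for any two snapshot operations a and b performed by the same process with a <_p b, returning vectors A and B respectively, A k ≤ B k holds for all k < n: the snapshots of each process return pointwise non-decreasing vectors along its process order. -/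
/-!
Every update of register `k` is performed by process `k`, so these updates are totally ordered by
the process order, which any linearization respects; hence along the witnessing word the value of
register `k` only increases. A snapshot returns the current memory, so a later snapshot sees a
value of register `k` at least as large as an earlier one.
-/

namespace SnapOp

variable {n : ℕ}

def writeTo? (k : Fin n) : SnapOp n → Option ℕ
  | update k' v => if k' = k then some v else none
  | snap _ => none

def step : SnapOp n → (Fin n → ℕ) → (Fin n → ℕ)
  | update k v, M => Function.update M k v
  | snap _, M => M

@[simp]
theorem writeTo?_eq_some {k : Fin n} {op : SnapOp n} {v : ℕ} :
    op.writeTo? k = some v ↔ op = update k v := by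
  cases op <;> simp only [writeTo?] <;> grind

end SnapOp

open SnapOp

section Runs

variable {n : ℕ} {k : Fin n} {M : Fin n → ℕ} {op : SnapOp n} {w : List (SnapOp n)}

theorem snapRun.tail (hrun : snapRun M (op :: w)) : snapRun (op.step M) w := by
  cases op with
  | update k v => exact hrun
  | snap A => exact hrun.2

theorem snapRun.eq_of_cons_snap {A : Fin n → ℕ} (hrun : snapRun M (snap A :: w)) : A = M :=
  hrun.1

def RegisterMonotone (k : Fin n) (M : Fin n → ℕ) (w : List (SnapOp n)) : Prop :=
  (M k :: w.filterMap (writeTo? k)).Pairwise (· ≤ ·)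

theorem RegisterMonotone.le_step_and_tail (h : RegisterMonotone k M (op :: w)) :
    M k ≤ op.step M k ∧ RegisterMonotone k (op.step M) w := by
  cases op with
  | update k' v =>
    by_cases hk : k' = k
    · subst hk
      simp only [RegisterMonotone, List.filterMap_cons, writeTo?, if_true,
        List.pairwise_cons, List.mem_cons, forall_eq_or_imp] at h
      refine ⟨by simpa [step] using h.1.1, ?_⟩
      rw [RegisterMonotone, step, Function.update_self]
      exact List.pairwise_cons.2 h.2
    · simpa [step, RegisterMonotone, writeTo?, hk, Function.update_of_ne (Ne.symm hk)] using h
  | snap A => exact ⟨le_rfl, h⟩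

theorem snapRun.le_of_snap_mem {B : Fin n → ℕ} (hrun : snapRun M w)
    (hmono : RegisterMonotone k M w) (hB : snap B ∈ w) : M k ≤ B k := by
  induction w generalizing M with
  | nil => simp at hB
  | cons op w ih =>
    obtain ⟨hle, hmono'⟩ := hmono.le_step_and_tail
    rcases List.mem_cons.1 hB with rfl | hB
    · rw [hrun.eq_of_cons_snap]
    · exact hle.trans (ih hrun.tail hmono' hB)

theorem snapRun.snap_le_of_sublist {A B : Fin n → ℕ} (hrun : snapRun M w)
    (hmono : RegisterMonotone k M w) (hAB : List.Sublist [snap A, snap B] w) : A k ≤ B k := by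
  induction w generalizing M with
  | nil => simp at hAB
  | cons op w ih =>
    obtain ⟨-, hmono'⟩ := hmono.le_step_and_tail
    rcases List.sublist_cons_iff.1 hAB with hAB | ⟨r, hr, hB⟩
    · exact ih hrun.tail hmono' hAB
    · obtain ⟨rfl, rfl⟩ := List.cons.inj hr
      rw [hrun.eq_of_cons_snap]
      exact hrun.tail.le_of_snap_mem hmono' (hB.subset (List.mem_singleton_self _))

end Runs

theorem List.Nodup.not_pair_sublist_swap_s12 {α : Type*} {l : List α} {a b : α} (hl : l.Nodup)
    (hab : List.Sublist [a, b] l) : ¬ List.Sublist [b, a] l := by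
  induction l with
  | nil => simp at hab
  | cons c l ih =>
    intro hba
    obtain ⟨hc, hl⟩ := List.nodup_cons.1 hl
    rcases List.sublist_cons_iff.1 hab with hab' | ⟨r, hr, hb⟩ <;>
      rcases List.sublist_cons_iff.1 hba with hba' | ⟨r', hr', ha⟩
    · exact ih hl hab' hba'
    -- otherwise the head `c` is `a` or `b`, and the other sublist puts it into `l` as well
    all_goals grind

theorem List.Nodup.pairwise_ne_and_not_swap {α : Type*} {r : α → α → Prop} {l : List α}
    (hl : l.Nodup) (hr : ∀ a b, r a b → List.Sublist [a, b] l) :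
    l.Pairwise (fun a b => a ≠ b ∧ ¬ r b a) :=
  List.pairwise_of_forall_sublist fun hab =>
    ⟨by simpa using hab.nodup hl, fun hba => hl.not_pair_sublist_swap_s12 hab (hr _ _ hba)⟩

theorem registerMonotone_map_of_linearization {n : ℕ} {O : Type*} {p : O → O → Prop}
    {π : O → Fin n} {lab : O → SnapOp n} {l : List O} (hl : l.Nodup)
    (hresp : ∀ a b, p a b → List.Sublist [a, b] l)
    (htotal : ∀ a b, π a = π b → a ≠ b → p a b ∨ p b a)
    (hown : ∀ o k v, lab o = update k v → π o = k)
    (hmono : ∀ u u' k v v', p u u' → lab u = update k v → lab u' = update k v' → v < v')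
    (k : Fin n) : RegisterMonotone k (fun _ => 0) (l.map lab) := by
  refine List.pairwise_cons.2 ⟨fun _ _ => Nat.zero_le _, ?_⟩
  rw [List.filterMap_map]
  refine (hl.pairwise_ne_and_not_swap hresp).filterMap _ ?_
  rintro o o' ⟨hne, hnot⟩ x hx y hy
  simp only [Function.comp_apply, writeTo?_eq_some] at hx hy
  rcases htotal o o' ((hown o k x hx).trans (hown o' k y hy).symm) hne with h | h
  · exact (hmono o o' k x y h hx hy).le
  · exact absurd h hnot

theorem sc_snapshots_monotone_along_process_general {n : ℕ} {O : Type}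
    (p : O → O → Prop) (π : O → Fin n) (lab : O → SnapOp n)
    (htotal : ∀ a b, π a = π b → a ≠ b → p a b ∨ p b a)
    (hown : ∀ o k v, lab o = SnapOp.update k v → π o = k)
    (hmono : ∀ u u' k v v', p u u' → lab u = SnapOp.update k v →
      lab u' = SnapOp.update k v' → v < v')
    (hSC : SeqConsList Set.univ p lab (TSnap n))
    (a b : O) (A B : Fin n → ℕ)
    (hA : lab a = SnapOp.snap A) (hB : lab b = SnapOp.snap B)
    (hab : p a b) :
    ∀ k, A k ≤ B k := by
  obtain ⟨l, hl, -, hresp, hrun⟩ := hSC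
  have hresp' : ∀ a b, p a b → List.Sublist [a, b] l :=
    fun a b => hresp a b trivial trivial
  intro k
  have hAB : List.Sublist [SnapOp.snap A, SnapOp.snap B] (l.map lab) := by
    simpa [hA, hB] using (hresp' a b hab).map lab
  exact snapRun.snap_le_of_sublist hrun
    (registerMonotone_map_of_linearization hl hresp' htotal hown hmono k) hAB

/-- Let `H` be a finite history over the snapshot-memory alphabet where `p`
(the process order, a strict partial order) relates only operations of the
same process `π`, totally orders the operations of each process, only process
`i` performs `update(i, ·)`, and for every register `k` the values written by
the successive updates of process `k` (in process order) are strictly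
increasing and positive. If `H` is sequentially consistent w.r.t. `TSnap n`,
then for any two snapshots `a <_p b` of the same process returning `A` and
`B`, we have `A k ≤ B k` for all `k`. -/
theorem sc_snapshots_monotone_along_process {n : ℕ} {O : Type} [Fintype O]
    (p : O → O → Prop) (π : O → Fin n) (lab : O → SnapOp n)
    (hp_irrefl : ∀ a, ¬ p a a) (hp_trans : ∀ a b c, p a b → p b c → p a c)
    (hproc : ∀ a b, p a b → π a = π b)
    (htotal : ∀ a b, π a = π b → a ≠ b → p a b ∨ p b a)
    (hown : ∀ o k v, lab o = SnapOp.update k v → π o = k)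
    (hmono : ∀ u u' k v v', p u u' → lab u = SnapOp.update k v →
      lab u' = SnapOp.update k v' → v < v')
    (hpos : ∀ o k v, lab o = SnapOp.update k v → 0 < v)
    (hSC : SeqConsList Set.univ p lab (TSnap n))
    (a b : O) (A B : Fin n → ℕ)
    (hA : lab a = SnapOp.snap A) (hB : lab b = SnapOp.snap B)
    (hab : p a b) :
    ∀ k, A k ≤ B k :=
  sc_snapshots_monotone_along_process_general p π lab htotal hown hmono hSC a b A B hA hB hab
end
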